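/- arXiv:1909.02418 — 2 statements merged into one kernel-verified Lean document; each statement's English description precedes it below -/
import Mathlib

section
/- Let 𝒞 be a conic in the real projective plane, given as the zero locus of a nondegenerate quadratic form on ℝ³, and let ABC and A'B'C' be two triangles inscribed in 𝒞 (all six points on 𝒞, each triple noncollinear, the six points pairwise distinct). Suppose ABC is perspective with A'B'C' with perspector Q₁ (lines AA', BB', CC' pass through Q₁) and ABC is perspective with C'A'B' with perspector Q₃ (lines AC', BA', CB' pass through Q₃), with Q₁ ≠ Q₃. Let P₁ be the intersection of the tangent line to 𝒞 at A with line BC, and P₂ the intersection of the tangent line to 𝒞 at B with line CA. Then P₁ and P₂ both lie on the line Q₁Q₃; that is, the line through the perspectors coincides with the Hessian line of ABC with respect to 𝒞. -/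
/-- Three points of the real projective plane are collinear if (some, equivalently any)
homogeneous representatives of them are linearly dependent. -/
def Collin (X Y Z : Projectivization ℝ (Fin 3 → ℝ)) : Prop :=
  ¬ LinearIndependent ℝ ![X.rep, Y.rep, Z.rep]

/-- A point of the real projective plane lies on the conic cut out by the quadratic form `q`. -/
def OnConic (q : QuadraticForm ℝ (Fin 3 → ℝ)) (X : Projectivization ℝ (Fin 3 → ℝ)) : Prop :=
  q X.rep = 0

/-!
Take representatives `a, b, c` of `A, B, C` as a basis of `ℝ³` and put `α = polar q b c`,
`β = polar q c a`, `γ = polar q a b`; these are nonzero because a nondegenerate form on `ℝ³` has no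
totally isotropic plane. In these coordinates the conic is `γxy + αyz + βzx = 0`, and the
Hessian line is the polar of `h = αa + βb + γc`, namely `βγx + γαy + αβz = 0`.
That `P₁` and `P₂` lie on it is a two-line computation. Three distinct points of the conic are
never collinear, so `A', B', C'` have nonzero coordinates; each perspectivity then yields a Ceva
relation between them, and the two relations together put both perspectors on the polar of `h`.
Since `h ≠ 0` and the form is nondegenerate, that polar is a line, through `Q₁, Q₃, P₁, P₂`.
-/

open Module Submodule QuadraticMap
open scoped LinearAlgebra.Projectivization

section LinearAlgebra

variable {K V : Type*} [Field K] [AddCommGroup V] [Module K V]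

theorem not_linearIndependent_of_map_eq_zero [FiniteDimensional K V] {ι : Type*} [Fintype ι]
    (hι : Fintype.card ι = finrank K V) {f : V →ₗ[K] K} (hf : f ≠ 0) {v : ι → V}
    (hv : ∀ i, f (v i) = 0) : ¬ LinearIndependent K v := fun hli =>
  hf <| LinearMap.ext_on_range (hli.span_eq_top_of_card_eq_finrank' hι) (by simpa using hv)

theorem Module.Basis.linearIndependent_iff_det_ne_zero {ι : Type*} [Fintype ι] [DecidableEq ι]
    (e : Basis ι K V) {v : ι → V} : LinearIndependent K v ↔ e.det v ≠ 0 := by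
  have : FiniteDimensional K V := e.finiteDimensional_of_finite
  rw [← isUnit_iff_ne_zero, ← e.is_basis_iff_det]
  exact ⟨fun h => ⟨h, h.span_eq_top_of_card_eq_finrank' (finrank_eq_card_basis e).symm⟩,
    And.left⟩

theorem QuadraticMap.polar_ne_zero_of_isotropic {q : QuadraticForm K V} [FiniteDimensional K V]
    (hV : finrank K V = 3) (hq : (polarBilin q).Nondegenerate) {u v : V} (hu : q u = 0)
    (hv : q v = 0) (huv : LinearIndependent K ![u, v]) : polar q u v ≠ 0 := by
  intro h
  set W := span K (Set.range ![u, v])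
  have hW : W ≤ LinearMap.BilinForm.orthogonal (polarBilin q) W := by
    rw [span_le]
    rintro _ ⟨i, rfl⟩ w hw
    obtain ⟨c, rfl⟩ := (mem_span_range_iff_exists_fun K).mp hw
    fin_cases i <;> simp [Fin.sum_univ_two, polar_self, hu, hv, h, polar_comm q v u]
  have := finrank_mono hW
  rw [LinearMap.BilinForm.finrank_orthogonal hq, finrank_span_eq_card huv, hV] at this
  simp at this

theorem Projectivization.eq_of_rep_eq_smul {X Y : ℙ K V} {c : K} (h : X.rep = c • Y.rep) :
    X = Y := by
  rw [← X.mk_rep, ← Y.mk_rep, mk_eq_mk_iff']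
  exact ⟨c, h.symm⟩

theorem Projectivization.linearIndependent_rep_pair {X Y : ℙ K V} (h : X ≠ Y) :
    LinearIndependent K ![X.rep, Y.rep] := by
  have := independent_iff.mp ((independent_pair_iff_ne X Y).mpr h)
  rwa [← FinVec.map_eq] at this

end LinearAlgebra

section HessianPole

variable {K V : Type*} [Field K] [AddCommGroup V] [Module K V] (q : QuadraticForm K V)

/-- For a triangle `abc` inscribed in the conic `q = 0`, the polar of this point is the
Hessian line of the triangle. -/
def hessianPole (a b c : V) : V := polar q b c • a + polar q c a • b + polar q a b • c

theorem hessianPole_rotate (a b c : V) : hessianPole q b c a = hessianPole q a b c := by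
  simp only [hessianPole]
  abel

theorem polar_hessianPole_of_mem_span {a b c p : V} (hb : q b = 0) (hc : q c = 0)
    (hp : p ∈ span K {b, c}) :
    polar q (hessianPole q a b c) p = 2 * polar q b c * polar q a p := by
  obtain ⟨s, t, rfl⟩ := mem_span_pair.mp hp
  simp only [hessianPole, polar_add_left, polar_add_right, polar_smul_left, polar_smul_right,
    polar_self, hb, hc, smul_eq_mul, nsmul_eq_mul, polar_comm q c b, polar_comm q c a]
  ring

variable {q}

theorem hessianPole_ne_zero {a b c : V} (habc : LinearIndependent K ![a, b, c])
    (hbc : polar q b c ≠ 0) : hessianPole q a b c ≠ 0 := fun h =>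
  hbc (Fintype.linearIndependent_iff.mp habc ![polar q b c, polar q c a, polar q a b]
    (by simpa [Fin.sum_univ_three, hessianPole] using h) 0)

theorem polar_eq_of_isotropic_basis (e : Basis (Fin 3) K V) (he : ∀ i, q (e i) = 0) (u v : V) :
    polar q u v =
      polar q (e 1) (e 2) * (e.repr u 1 * e.repr v 2 + e.repr u 2 * e.repr v 1) +
      polar q (e 2) (e 0) * (e.repr u 2 * e.repr v 0 + e.repr u 0 * e.repr v 2) +
      polar q (e 0) (e 1) * (e.repr u 0 * e.repr v 1 + e.repr u 1 * e.repr v 0) := by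
  conv_lhs => rw [← e.sum_repr u, ← e.sum_repr v]
  simp only [Fin.sum_univ_three, polar_add_left, polar_add_right, polar_smul_left,
    polar_smul_right, polar_self, he, smul_eq_mul, smul_zero, polar_comm q (e 1) (e 0),
    polar_comm q (e 2) (e 1), polar_comm q (e 0) (e 2)]
  ring

theorem polar_hessianPole_eq_of_isotropic_basis (e : Basis (Fin 3) K V)
    (he : ∀ i, q (e i) = 0) (v : V) :
    polar q (hessianPole q (e 0) (e 1) (e 2)) v =
      2 * (polar q (e 2) (e 0) * polar q (e 0) (e 1) * e.repr v 0 +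
        polar q (e 0) (e 1) * polar q (e 1) (e 2) * e.repr v 1 +
        polar q (e 1) (e 2) * polar q (e 2) (e 0) * e.repr v 2) := by
  rw [polar_eq_of_isotropic_basis e he]
  simp [hessianPole]
  ring

end HessianPole

section Plane

variable {q : QuadraticForm ℝ (Fin 3 → ℝ)} {X Y Z : ℙ ℝ (Fin 3 → ℝ)}

theorem collin_iff_mem_span (hXY : X ≠ Y) :
    Collin X Y Z ↔ Z.rep ∈ span ℝ {X.rep, Y.rep} := by
  have : ![X.rep, Y.rep, Z.rep] = Fin.snoc ![X.rep, Y.rep] Z.rep := by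
    ext i; fin_cases i <;> rfl
  rw [Collin, this, linearIndependent_finSnoc, Matrix.range_cons_cons_empty]
  simp [Projectivization.linearIndependent_rep_pair hXY]

theorem collin_iff_det (e : Basis (Fin 3) ℝ (Fin 3 → ℝ)) :
    Collin X Y Z ↔ e.det ![X.rep, Y.rep, Z.rep] = 0 := by
  rw [Collin, e.linearIndependent_iff_det_ne_zero, not_not]

theorem injective_of_not_collin (h : ¬ Collin X Y Z) : Function.Injective ![X, Y, Z] := by
  have h' : Function.Injective (FinVec.map Projectivization.rep ![X, Y, Z]) :=
    (not_not.mp h).injective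
  rw [FinVec.map_eq] at h'
  exact h'.of_comp

theorem polar_rep_ne_zero (hq : (polarBilin q).Nondegenerate) (hX : OnConic q X)
    (hY : OnConic q Y) (hXY : X ≠ Y) : polar q X.rep Y.rep ≠ 0 :=
  polar_ne_zero_of_isotropic (by simp) hq hX hY (Projectivization.linearIndependent_rep_pair hXY)

theorem not_collin_of_onConic (hq : (polarBilin q).Nondegenerate) (hX : OnConic q X)
    (hY : OnConic q Y) (hZ : OnConic q Z) (hXY : X ≠ Y) (hXZ : X ≠ Z) (hYZ : Y ≠ Z) :
    ¬ Collin X Y Z := by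
  rw [collin_iff_mem_span hXY, mem_span_pair]
  rintro ⟨s, t, hst⟩
  have hst₀ : s * t * polar q X.rep Y.rep = 0 := by
    have hZ : q (s • X.rep + t • Y.rep) = 0 := hst ▸ hZ
    rw [QuadraticMap.map_add q, QuadraticMap.map_smul, QuadraticMap.map_smul, polar_smul_left,
      polar_smul_right, hX, hY] at hZ
    simpa [mul_assoc] using hZ
  rcases mul_eq_zero.mp ((mul_eq_zero.mp hst₀).resolve_right (polar_rep_ne_zero hq hX hY hXY))
    with rfl | rfl
  · exact hYZ (Projectivization.eq_of_rep_eq_smul (by simpa using hst.symm)).symm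
  · exact hXZ (Projectivization.eq_of_rep_eq_smul (by simpa using hst.symm)).symm

theorem collin_of_polar_eq_zero (hq : (polarBilin q).Nondegenerate) {h : Fin 3 → ℝ} (hh : h ≠ 0)
    (hX : polar q h X.rep = 0) (hY : polar q h Y.rep = 0) (hZ : polar q h Z.rep = 0) :
    Collin X Y Z :=
  not_linearIndependent_of_map_eq_zero (f := polarBilin q h) (by simp)
    (fun h0 => hh (hq.1 h fun n => by simp [h0])) (by intro i; fin_cases i <;> simpa)

end Plane

section Triangle

variable {q : QuadraticForm ℝ (Fin 3 → ℝ)} {A B C : ℙ ℝ (Fin 3 → ℝ)} (hABC : ¬ Collin A B C)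

noncomputable def triangleBasis : Basis (Fin 3) ℝ (Fin 3 → ℝ) :=
  basisOfLinearIndependentOfCardEqFinrank (not_not.mp hABC) (by simp)

@[simp]
theorem coe_triangleBasis : ⇑(triangleBasis hABC) = ![A.rep, B.rep, C.rep] :=
  coe_basisOfLinearIndependentOfCardEqFinrank _ _

theorem triangleBasis_apply (i : Fin 3) : triangleBasis hABC i = (![A, B, C] i).rep := by
  fin_cases i <;> simp

noncomputable def triangleCoords (X : ℙ ℝ (Fin 3 → ℝ)) : Fin 3 → ℝ :=
  (triangleBasis hABC).repr X.rep

theorem triangleCoords_vertex (i : Fin 3) :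
    triangleCoords hABC (![A, B, C] i) = Pi.single i 1 := by
  rw [triangleCoords, ← triangleBasis_apply hABC, Basis.repr_self, Finsupp.single_eq_pi_single]

theorem triangleCoords_ne_zero (X : ℙ ℝ (Fin 3 → ℝ)) : triangleCoords hABC X ≠ 0 := by
  simpa [triangleCoords] using X.rep_nonzero

theorem collin_vertex_iff (i : Fin 3) (X Y : ℙ ℝ (Fin 3 → ℝ)) :
    Collin (![A, B, C] i) X Y ↔
      triangleCoords hABC X (i + 1) * triangleCoords hABC Y (i + 2) -
        triangleCoords hABC X (i + 2) * triangleCoords hABC Y (i + 1) = 0 := by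
  have hv := triangleCoords_vertex hABC i
  rw [collin_iff_det (triangleBasis hABC), Basis.det_apply, Matrix.det_fin_three]
  simp only [Basis.toMatrix_apply]
  fin_cases i <;> simp_all [triangleCoords] <;> ring_nf

theorem triangleCoords_apply_ne_zero (hq : (polarBilin q).Nondegenerate)
    (hv : ∀ i, OnConic q (![A, B, C] i)) {X : ℙ ℝ (Fin 3 → ℝ)} (hX : OnConic q X)
    (hXv : ∀ i, ![A, B, C] i ≠ X) (i : Fin 3) : triangleCoords hABC X i ≠ 0 := by
  have h := not_collin_of_onConic hq (hv (i + 1)) (hv (i + 2)) hX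
    ((injective_of_not_collin hABC).ne (by fin_cases i <;> decide)) (hXv _) (hXv _)
  rw [collin_vertex_iff, triangleCoords_vertex] at h
  fin_cases i <;> simpa [Pi.single_apply] using h

theorem triangleBasis_isotropic (hv : ∀ i, OnConic q (![A, B, C] i)) (i : Fin 3) :
    q (triangleBasis hABC i) = 0 := by
  rw [triangleBasis_apply]
  exact hv i

theorem triangleCoords_of_onConic (hv : ∀ i, OnConic q (![A, B, C] i))
    {X : ℙ ℝ (Fin 3 → ℝ)} (hX : OnConic q X) :
    polar q A.rep B.rep * triangleCoords hABC X 0 * triangleCoords hABC X 1 +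
      polar q B.rep C.rep * triangleCoords hABC X 1 * triangleCoords hABC X 2 +
      polar q C.rep A.rep * triangleCoords hABC X 2 * triangleCoords hABC X 0 = 0 := by
  have h := polar_eq_of_isotropic_basis _ (triangleBasis_isotropic hABC hv) X.rep X.rep
  rw [polar_self, hX, smul_zero] at h
  simp only [coe_triangleBasis, Matrix.cons_val] at h
  simp only [triangleCoords]
  linear_combination -h / 2

theorem polar_hessianPole_eq_triangleCoords (hv : ∀ i, OnConic q (![A, B, C] i))
    (X : ℙ ℝ (Fin 3 → ℝ)) :
    polar q (hessianPole q A.rep B.rep C.rep) X.rep =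
      2 * (polar q C.rep A.rep * polar q A.rep B.rep * triangleCoords hABC X 0 +
        polar q A.rep B.rep * polar q B.rep C.rep * triangleCoords hABC X 1 +
        polar q B.rep C.rep * polar q C.rep A.rep * triangleCoords hABC X 2) := by
  simpa [triangleCoords] using
    polar_hessianPole_eq_of_isotropic_basis _ (triangleBasis_isotropic hABC hv) X.rep

end Triangle

section Algebra

variable {K : Type*} [Field K]

theorem ceva_of_perspector {p₁ p₂ p₃ g : Fin 3 → K} (h₁ : p₁ 1 * g 2 - p₁ 2 * g 1 = 0)
    (h₂ : p₂ 2 * g 0 - p₂ 0 * g 2 = 0) (h₃ : p₃ 0 * g 1 - p₃ 1 * g 0 = 0) (hz₁ : p₁ 2 ≠ 0)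
    (hz₂ : p₂ 2 ≠ 0) (hg : g ≠ 0) : p₂ 0 * p₃ 1 * p₁ 2 = p₃ 0 * p₁ 1 * p₂ 2 := by
  have hg₂ : g 2 ≠ 0 := by
    intro hg₂
    refine hg (funext fun i => ?_)
    fin_cases i
    · simpa [hg₂, hz₂] using h₂
    · simpa [hg₂, hz₁] using h₁
    · exact hg₂
  refine mul_right_cancel₀ hg₂ ?_
  linear_combination -(p₃ 1 * p₁ 2) * h₂ - (p₃ 0 * p₂ 2) * h₁ - (p₁ 2 * p₂ 2) * h₃

/- With `uᵢ = β * pᵢ 0 / (α * pᵢ 1)`, the parameter of the line through `C` and `Pᵢ`, the two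
Ceva relations read `u₁(1 + u₂) = u₂(1 + u₃) = u₃(1 + u₁)` (`möbius₁`, `möbius₂`). Eliminating
`u₃` leaves `(u₁ - u₂)(1 + u₁ + u₁u₂) = 0`, so `1 + u₁ + u₁u₂ = 0` (`cyclic`), which says that
the perspector lies on the Hessian line. -/
theorem perspector_mem_hessianLine {α β γ : K} {p₁ p₂ p₃ g : Fin 3 → K}
    (hp₁ : γ * p₁ 0 * p₁ 1 + α * p₁ 1 * p₁ 2 + β * p₁ 2 * p₁ 0 = 0)
    (hp₂ : γ * p₂ 0 * p₂ 1 + α * p₂ 1 * p₂ 2 + β * p₂ 2 * p₂ 0 = 0)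
    (hp₃ : γ * p₃ 0 * p₃ 1 + α * p₃ 1 * p₃ 2 + β * p₃ 2 * p₃ 0 = 0)
    (c₁ : p₂ 0 * p₃ 1 * p₁ 2 = p₃ 0 * p₁ 1 * p₂ 2) (c₂ : p₁ 0 * p₂ 1 * p₃ 2 = p₂ 0 * p₃ 1 * p₁ 2)
    (h₁ : p₁ 1 * g 2 - p₁ 2 * g 1 = 0) (h₂ : p₂ 2 * g 0 - p₂ 0 * g 2 = 0)
    (hn₁ : ∀ i, p₁ i ≠ 0) (hn₂ : ∀ i, p₂ i ≠ 0) (hn₃ : ∀ i, p₃ i ≠ 0)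
    (hD : p₁ 0 * p₂ 1 - p₁ 1 * p₂ 0 ≠ 0) :
    β * γ * g 0 + γ * α * g 1 + α * β * g 2 = 0 := by
  have möbius₁ : p₁ 0 * (α * p₂ 1 + β * p₂ 0) * p₃ 1 = p₂ 0 * (α * p₃ 1 + β * p₃ 0) * p₁ 1 := by
    refine mul_right_cancel₀ (mul_ne_zero (hn₂ 2) (hn₃ 2)) ?_
    linear_combination (p₁ 0 * p₃ 1 * p₃ 2) * hp₂ - (p₂ 0 * p₁ 1 * p₂ 2) * hp₃
      - γ * p₂ 0 * p₃ 1 * (c₁ + c₂)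
  have möbius₂ : p₂ 0 * (α * p₃ 1 + β * p₃ 0) * p₁ 1 = p₃ 0 * (α * p₁ 1 + β * p₁ 0) * p₂ 1 := by
    refine mul_right_cancel₀ (mul_ne_zero (hn₃ 2) (hn₁ 2)) ?_
    linear_combination (p₂ 0 * p₁ 1 * p₁ 2) * hp₃ - (p₃ 0 * p₂ 1 * p₃ 2) * hp₁
      + γ * p₃ 0 * p₁ 1 * c₂
  have cyclic : α ^ 2 * p₁ 1 * p₂ 1 + β * p₁ 0 * (α * p₂ 1 + β * p₂ 0) = 0 := by
    refine (mul_eq_zero.mp ?_).resolve_left (mul_ne_zero hD (hn₃ 1))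
    linear_combination (α * p₁ 1 + β * p₁ 0) * p₂ 1 * möbius₁
      - β * p₂ 0 * p₁ 1 * (möbius₁ + möbius₂)
  have onHessian : α ^ 2 * p₁ 1 * p₂ 2 = β * γ * p₁ 0 * p₂ 0 := by
    refine mul_left_cancel₀ (hn₂ 1) ?_
    linear_combination p₂ 2 * cyclic - β * p₁ 0 * hp₂
  refine mul_right_cancel₀ (mul_ne_zero (hn₁ 0) (mul_ne_zero (hn₁ 2) (hn₂ 2))) ?_
  linear_combination p₁ 0 * (β * γ * p₁ 2 * h₂ - γ * α * p₂ 2 * h₁)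
    + g 2 * (α * p₂ 2 * hp₁ - p₁ 2 * onHessian)

end Algebra

section Perspectors

variable {q : QuadraticForm ℝ (Fin 3 → ℝ)} {A B C : ℙ ℝ (Fin 3 → ℝ)}

def IsPerspector (A B C A' B' C' Q : ℙ ℝ (Fin 3 → ℝ)) : Prop :=
  Collin A A' Q ∧ Collin B B' Q ∧ Collin C C' Q

theorem IsPerspector.triangleCoords_minors (hABC : ¬ Collin A B C) {P₁ P₂ P₃ Q : ℙ ℝ (Fin 3 → ℝ)}
    (hQ : IsPerspector A B C P₁ P₂ P₃ Q) :
    triangleCoords hABC P₁ 1 * triangleCoords hABC Q 2 -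
        triangleCoords hABC P₁ 2 * triangleCoords hABC Q 1 = 0 ∧
      triangleCoords hABC P₂ 2 * triangleCoords hABC Q 0 -
        triangleCoords hABC P₂ 0 * triangleCoords hABC Q 2 = 0 ∧
      triangleCoords hABC P₃ 0 * triangleCoords hABC Q 1 -
        triangleCoords hABC P₃ 1 * triangleCoords hABC Q 0 = 0 :=
  ⟨by simpa using (collin_vertex_iff hABC 0 _ _).mp hQ.1,
    by simpa using (collin_vertex_iff hABC 1 _ _).mp hQ.2.1,
    by simpa using (collin_vertex_iff hABC 2 _ _).mp hQ.2.2⟩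

theorem polar_hessianPole_eq_zero_of_tangent {P : ℙ ℝ (Fin 3 → ℝ)} (hB : OnConic q B)
    (hC : OnConic q C) (hBC : B ≠ C) (hP : polar q A.rep P.rep = 0 ∧ Collin B C P) :
    polar q (hessianPole q A.rep B.rep C.rep) P.rep = 0 := by
  rw [polar_hessianPole_of_mem_span q hB hC ((collin_iff_mem_span hBC).mp hP.2), hP.1, mul_zero]

theorem polar_hessianPole_perspectors_eq_zero (hq : (polarBilin q).Nondegenerate)
    {A' B' C' Q Q' : ℙ ℝ (Fin 3 → ℝ)} (hA : OnConic q A) (hB : OnConic q B) (hC : OnConic q C)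
    (hA' : OnConic q A') (hB' : OnConic q B') (hC' : OnConic q C') (hABC : ¬ Collin A B C)
    (hdistinct : List.Pairwise (· ≠ ·) [A, B, C, A', B', C'])
    (hQ : IsPerspector A B C A' B' C' Q) (hQ' : IsPerspector A B C C' A' B' Q') :
    polar q (hessianPole q A.rep B.rep C.rep) Q.rep = 0 ∧
      polar q (hessianPole q A.rep B.rep C.rep) Q'.rep = 0 := by
  simp only [List.pairwise_cons, List.mem_cons, forall_eq_or_imp, List.not_mem_nil,
    IsEmpty.forall_iff, implies_true, List.Pairwise.nil, and_true] at hdistinct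
  obtain ⟨⟨-, -, hAA', hAB', hAC'⟩, ⟨-, hBA', hBB', hBC'⟩, ⟨hCA', hCB', hCC'⟩, ⟨hA'B', hA'C'⟩, -⟩ :=
    hdistinct
  have hv : ∀ i, OnConic q (![A, B, C] i) := by intro i; fin_cases i <;> assumption
  have hx₁ := triangleCoords_apply_ne_zero hABC hq hv hA' (by intro i; fin_cases i <;> assumption)
  have hx₂ := triangleCoords_apply_ne_zero hABC hq hv hB' (by intro i; fin_cases i <;> assumption)
  have hx₃ := triangleCoords_apply_ne_zero hABC hq hv hC' (by intro i; fin_cases i <;> assumption)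
  have hD₁₂ := (collin_vertex_iff hABC 2 A' B').not.mp
    (not_collin_of_onConic hq hC hA' hB' hCA' hCB' hA'B')
  have hD₃₁ := (collin_vertex_iff hABC 2 C' A').not.mp
    (not_collin_of_onConic hq hC hC' hA' hCC' hCA' hA'C'.symm)
  obtain ⟨e₁, e₂, e₃⟩ := hQ.triangleCoords_minors hABC
  obtain ⟨f₁, f₂, f₃⟩ := hQ'.triangleCoords_minors hABC
  have c₁ := ceva_of_perspector e₁ e₂ e₃ (hx₁ 2) (hx₂ 2) (triangleCoords_ne_zero hABC Q)
  have c₂ := ceva_of_perspector f₁ f₂ f₃ (hx₃ 2) (hx₁ 2) (triangleCoords_ne_zero hABC Q')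
  have hcon := fun {X} (hX : OnConic q X) => triangleCoords_of_onConic hABC hv hX
  rw [polar_hessianPole_eq_triangleCoords hABC hv, polar_hessianPole_eq_triangleCoords hABC hv,
    perspector_mem_hessianLine (hcon hA') (hcon hB') (hcon hC') c₁ c₂ e₁ e₂ hx₁ hx₂ hx₃ hD₁₂,
    perspector_mem_hessianLine (hcon hC') (hcon hA') (hcon hB') c₂ (c₂.trans c₁).symm f₁ f₂
      hx₃ hx₁ hx₂ hD₃₁]
  simp

end Perspectors

theorem perspectors_line_eq_hessian_line_general
    (q : QuadraticForm ℝ (Fin 3 → ℝ))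
    (hq : LinearMap.BilinForm.Nondegenerate (QuadraticMap.polarBilin q))
    (A B C A' B' C' : Projectivization ℝ (Fin 3 → ℝ))
    (hA : OnConic q A) (hB : OnConic q B) (hC : OnConic q C)
    (hA' : OnConic q A') (hB' : OnConic q B') (hC' : OnConic q C')
    (hABC : ¬ Collin A B C)
    (hdistinct : List.Pairwise (· ≠ ·) [A, B, C, A', B', C'])
    (Q₁ Q₃ : Projectivization ℝ (Fin 3 → ℝ))
    (hQ₁ : Collin A A' Q₁ ∧ Collin B B' Q₁ ∧ Collin C C' Q₁)
    (hQ₃ : Collin A C' Q₃ ∧ Collin B A' Q₃ ∧ Collin C B' Q₃)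
    (P₁ P₂ : Projectivization ℝ (Fin 3 → ℝ))
    -- `P₁` is the intersection of the tangent line to the conic at `A` with the line `BC`
    (hP₁ : QuadraticMap.polarBilin q A.rep P₁.rep = 0 ∧ Collin B C P₁)
    -- `P₂` is the intersection of the tangent line to the conic at `B` with the line `CA`
    (hP₂ : QuadraticMap.polarBilin q B.rep P₂.rep = 0 ∧ Collin C A P₂) :
    Collin Q₁ Q₃ P₁ ∧ Collin Q₁ Q₃ P₂ := by
  have hBC : B ≠ C := (injective_of_not_collin hABC).ne (by decide : (1 : Fin 3) ≠ 2)
  have hCA : C ≠ A := (injective_of_not_collin hABC).ne (by decide : (2 : Fin 3) ≠ 0)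
  have hh : hessianPole q A.rep B.rep C.rep ≠ 0 :=
    hessianPole_ne_zero (not_not.mp hABC) (polar_rep_ne_zero hq hB hC hBC)
  obtain ⟨hQ₁h, hQ₃h⟩ :=
    polar_hessianPole_perspectors_eq_zero hq hA hB hC hA' hB' hC' hABC hdistinct hQ₁ hQ₃
  have hP₁h := polar_hessianPole_eq_zero_of_tangent hB hC hBC hP₁
  have hP₂h : polar q (hessianPole q A.rep B.rep C.rep) P₂.rep = 0 := by
    rw [← hessianPole_rotate]
    exact polar_hessianPole_eq_zero_of_tangent hC hA hCA hP₂
  exact ⟨collin_of_polar_eq_zero hq hh hQ₁h hQ₃h hP₁h,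
    collin_of_polar_eq_zero hq hh hQ₁h hQ₃h hP₂h⟩

theorem perspectors_line_eq_hessian_line
    (q : QuadraticForm ℝ (Fin 3 → ℝ))
    (hq : LinearMap.BilinForm.Nondegenerate (QuadraticMap.polarBilin q))
    (A B C A' B' C' : Projectivization ℝ (Fin 3 → ℝ))
    (hA : OnConic q A) (hB : OnConic q B) (hC : OnConic q C)
    (hA' : OnConic q A') (hB' : OnConic q B') (hC' : OnConic q C')
    (hABC : ¬ Collin A B C) (hA'B'C' : ¬ Collin A' B' C')
    (hdistinct : List.Pairwise (· ≠ ·) [A, B, C, A', B', C'])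
    (Q₁ Q₃ : Projectivization ℝ (Fin 3 → ℝ)) (hQ₁Q₃ : Q₁ ≠ Q₃)
    (hQ₁ : Collin A A' Q₁ ∧ Collin B B' Q₁ ∧ Collin C C' Q₁)
    (hQ₃ : Collin A C' Q₃ ∧ Collin B A' Q₃ ∧ Collin C B' Q₃)
    (P₁ P₂ : Projectivization ℝ (Fin 3 → ℝ))
    -- `P₁` is the intersection of the tangent line to the conic at `A` with the line `BC`
    (hP₁ : QuadraticMap.polarBilin q A.rep P₁.rep = 0 ∧ Collin B C P₁)
    -- `P₂` is the intersection of the tangent line to the conic at `B` with the line `CA`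
    (hP₂ : QuadraticMap.polarBilin q B.rep P₂.rep = 0 ∧ Collin C A P₂) :
    Collin Q₁ Q₃ P₁ ∧ Collin Q₁ Q₃ P₂ :=
  perspectors_line_eq_hessian_line_general q hq A B C A' B' C' hA hB hC hA' hB' hC' hABC hdistinct
    Q₁ Q₃ hQ₁ hQ₃ P₁ P₂ hP₁ hP₂
end

section
/- Fix real numbers t and y₀ with (2t·y₀ − y₀² + 1) ≠ 0, (3t²y₀² + 2√3·t²y₀ − 3t² + 8t·y₀ − y₀² + 2√3·y₀ + 1) ≠ 0, and (3t²y₀² − 2√3·t²y₀ − 3t² + 8t·y₀ − y₀² − 2√3·y₀ + 1) ≠ 0. With P, Q, R, 𝒦 as in the setup and V = (0, y₀), define P'' = ((3t²−1)(y₀²+1)/((t²+1)(2t·y₀−y₀²+1)), 2(t²y₀+2t−y₀)(t·y₀−1)/((t²+1)(2t·y₀−y₀²+1))), Q'' = (−2(3√3·t³+3t²−√3·t−1)(y₀²+1)/((3t²y₀²+2√3·t²y₀−3t²+8t·y₀−y₀²+2√3·y₀+1)(t²+1)), −(√3·t⁴y₀²+6t⁴y₀−2t³y₀²+3√3·t⁴−8√3·t²y₀²+6t³+4t²y₀−10t·y₀²−4√3·t²−√3·y₀²−2t−2y₀+√3)/((3t²y₀²+2√3·t²y₀−3t²+8t·y₀−y₀²+2√3·y₀+1)(t²+1))),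 and R'' = (2(3√3·t³−3t²−√3·t+1)(y₀²+1)/((3t²y₀²−2√3·t²y₀−3t²+8t·y₀−y₀²−2√3·y₀+1)(t²+1)), (√3·t⁴y₀²−6t⁴y₀+2t³y₀²+3√3·t⁴−8√3·t²y₀²−6t³−4t²y₀+10t·y₀²−4√3·t²−√3·y₀²+2t+2y₀+√3)/((3t²y₀²−2√3·t²y₀−3t²+8t·y₀−y₀²−2√3·y₀+1)(t²+1))). Then P'', Q'', R'' each satisfy the equation of 𝒦, and the point V = (0, y₀) lies on each of the lines PP'', QQ'', RR''. -/
open Complex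

/-- Abbreviation for `√3`. -/
noncomputable def sqrt3 : ℝ := Real.sqrt 3

/-- `P = (−1 + 2(1−t²)/(1+t²), 4t/(1+t²))`, a point of the circle of center `(-1,0)`
and radius `2`. -/
noncomputable def Pt (t : ℝ) : ℂ :=
  ⟨-1 + 2 * (1 - t ^ 2) / (1 + t ^ 2), 4 * t / (1 + t ^ 2)⟩

/-- `Q = (−2(√3·t+1)/(t²+1), −(√3·t²+2t−√3)/(t²+1))`, obtained from `P` by a `120°`
rotation about `(-1,0)`. -/
noncomputable def Qt (t : ℝ) : ℂ :=
  ⟨-2 * (sqrt3 * t + 1) / (t ^ 2 + 1), -(sqrt3 * t ^ 2 + 2 * t - sqrt3) / (t ^ 2 + 1)⟩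

/-- `R = (2(√3·t−1)/(t²+1), (√3·t²−2t−√3)/(t²+1))`, obtained from `Q` by a `120°`
rotation about `(-1,0)`. -/
noncomputable def Rt (t : ℝ) : ℂ :=
  ⟨2 * (sqrt3 * t - 1) / (t ^ 2 + 1), (sqrt3 * t ^ 2 - 2 * t - sqrt3) / (t ^ 2 + 1)⟩

/-- The point `z` lies on the conic `𝒦 : (3t²−1)x² + (2t³−6t)xy + (1−3t²)y² + (1−3t²) = 0`. -/
def OnK (t : ℝ) (z : ℂ) : Prop :=
  (3 * t ^ 2 - 1) * z.re ^ 2 + (2 * t ^ 3 - 6 * t) * z.re * z.im +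
    (1 - 3 * t ^ 2) * z.im ^ 2 + (1 - 3 * t ^ 2) = 0

/-- First nonvanishing denominator factor `2t·y₀ − y₀² + 1`. -/
noncomputable def D₀ (t y : ℝ) : ℝ := 2 * t * y - y ^ 2 + 1

/-- Second nonvanishing denominator factor
`3t²y₀² + 2√3·t²y₀ − 3t² + 8t·y₀ − y₀² + 2√3·y₀ + 1`. -/
noncomputable def D₁ (t y : ℝ) : ℝ :=
  3 * t ^ 2 * y ^ 2 + 2 * sqrt3 * t ^ 2 * y - 3 * t ^ 2 + 8 * t * y - y ^ 2 + 2 * sqrt3 * y + 1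

/-- Third nonvanishing denominator factor
`3t²y₀² − 2√3·t²y₀ − 3t² + 8t·y₀ − y₀² − 2√3·y₀ + 1`. -/
noncomputable def D₂ (t y : ℝ) : ℝ :=
  3 * t ^ 2 * y ^ 2 - 2 * sqrt3 * t ^ 2 * y - 3 * t ^ 2 + 8 * t * y - y ^ 2 - 2 * sqrt3 * y + 1

/-- The point `P''` of the setup of Theorem 2. -/
noncomputable def Ppp (t y : ℝ) : ℂ :=
  ⟨(3 * t ^ 2 - 1) * (y ^ 2 + 1) / ((t ^ 2 + 1) * D₀ t y),
   2 * (t ^ 2 * y + 2 * t - y) * (t * y - 1) / ((t ^ 2 + 1) * D₀ t y)⟩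

/-- The point `Q''` of the setup of Theorem 2. -/
noncomputable def Qpp (t y : ℝ) : ℂ :=
  ⟨-2 * (3 * sqrt3 * t ^ 3 + 3 * t ^ 2 - sqrt3 * t - 1) * (y ^ 2 + 1) / (D₁ t y * (t ^ 2 + 1)),
   -(sqrt3 * t ^ 4 * y ^ 2 + 6 * t ^ 4 * y - 2 * t ^ 3 * y ^ 2 + 3 * sqrt3 * t ^ 4
     - 8 * sqrt3 * t ^ 2 * y ^ 2 + 6 * t ^ 3 + 4 * t ^ 2 * y - 10 * t * y ^ 2
     - 4 * sqrt3 * t ^ 2 - sqrt3 * y ^ 2 - 2 * t - 2 * y + sqrt3) / (D₁ t y * (t ^ 2 + 1))⟩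

/-- The point `R''` of the setup of Theorem 2. -/
noncomputable def Rpp (t y : ℝ) : ℂ :=
  ⟨2 * (3 * sqrt3 * t ^ 3 - 3 * t ^ 2 - sqrt3 * t + 1) * (y ^ 2 + 1) / (D₂ t y * (t ^ 2 + 1)),
   (sqrt3 * t ^ 4 * y ^ 2 - 6 * t ^ 4 * y + 2 * t ^ 3 * y ^ 2 + 3 * sqrt3 * t ^ 4
     - 8 * sqrt3 * t ^ 2 * y ^ 2 - 6 * t ^ 3 - 4 * t ^ 2 * y + 10 * t * y ^ 2
     - 4 * sqrt3 * t ^ 2 - sqrt3 * y ^ 2 + 2 * t + 2 * y + sqrt3) / (D₂ t y * (t ^ 2 + 1))⟩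

/-! All six claims are rational identities in `t`, `y₀` and `√3`. Once the denominators are
cleared (they are nonzero by hypothesis, or are `t² + 1`), the conic equations of `Q''` and `R''`
become polynomial identities modulo `√3² = 3`, and the remaining four claims hold identically. -/

theorem Complex.collinear_of_cross_eq_zero {a b c : ℂ}
    (h : (b - a).re * (c - a).im - (b - a).im * (c - a).re = 0) :
    Collinear ℝ ({a, b, c} : Set ℂ) := by
  rcases eq_or_ne b a with rfl | hba
  · simpa using collinear_pair ℝ b c
  have hba' : b - a ≠ 0 := sub_ne_zero.2 hba
  -- the ratio `(c - a) / (b - a)` is real, and it is the coefficient of `c` on the line `ab`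
  have hratio : ((((c - a) / (b - a)).re : ℝ) : ℂ) = (c - a) / (b - a) := by
    refine Complex.ext rfl ?_
    rw [Complex.ofReal_im, Complex.div_im, eq_comm, ← sub_div, div_eq_zero_iff]
    exact Or.inl (by linear_combination h)
  refine (collinear_iff_of_mem (Set.mem_insert a _)).2 ⟨b - a, ?_⟩
  rintro p (rfl | rfl | hp)
  · exact ⟨0, by simp⟩
  · exact ⟨1, by simp⟩
  · rw [Set.mem_singleton_iff.1 hp]
    refine ⟨((c - a) / (b - a)).re, ?_⟩
    rw [vadd_eq_add, Complex.real_smul, hratio, div_mul_cancel₀ _ hba', sub_add_cancel]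

theorem onK_mk_div {t a b d : ℝ} (hd : d ≠ 0)
    (h : (3 * t ^ 2 - 1) * a ^ 2 + (2 * t ^ 3 - 6 * t) * a * b
      + (1 - 3 * t ^ 2) * b ^ 2 + (1 - 3 * t ^ 2) * d ^ 2 = 0) :
    OnK t ⟨a / d, b / d⟩ := by
  unfold OnK
  field_simp
  linear_combination h

theorem collinear_mk_div_mk_div {p₁ p₂ e a b d x y : ℝ} (he : e ≠ 0) (hd : d ≠ 0)
    (h : (a * e - p₁ * d) * (y * e - p₂) - (b * e - p₂ * d) * (x * e - p₁) = 0) :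
    Collinear ℝ ({⟨p₁ / e, p₂ / e⟩, ⟨a / d, b / d⟩, ⟨x, y⟩} : Set ℂ) := by
  apply Complex.collinear_of_cross_eq_zero
  simp only [Complex.sub_re, Complex.sub_im]
  field_simp
  linear_combination h

theorem Pt_eq (t : ℝ) : Pt t = ⟨(1 - 3 * t ^ 2) / (1 + t ^ 2), 4 * t / (1 + t ^ 2)⟩ := by
  refine Complex.ext ?_ rfl
  simp only [Pt]
  field_simp
  ring

theorem sqrt3_sq : sqrt3 ^ 2 = 3 := Real.sq_sqrt (by norm_num)

section

variable {t y : ℝ}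

theorem onK_Ppp (h : D₀ t y ≠ 0) : OnK t (Ppp t y) :=
  onK_mk_div (mul_ne_zero (by positivity) h) (by unfold D₀; ring)

theorem onK_Qpp (h : D₁ t y ≠ 0) : OnK t (Qpp t y) :=
  onK_mk_div (mul_ne_zero h (by positivity)) (by
    unfold D₁
    linear_combination (3 * t ^ 2 - 1) ^ 2 * (t ^ 2 + 1) ^ 3 * (y ^ 2 + 1) ^ 2 * sqrt3_sq)

theorem onK_Rpp (h : D₂ t y ≠ 0) : OnK t (Rpp t y) :=
  onK_mk_div (mul_ne_zero h (by positivity)) (by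
    unfold D₂
    linear_combination (3 * t ^ 2 - 1) ^ 2 * (t ^ 2 + 1) ^ 3 * (y ^ 2 + 1) ^ 2 * sqrt3_sq)

theorem collinear_Pt_Ppp (h : D₀ t y ≠ 0) : Collinear ℝ ({Pt t, Ppp t y, ⟨0, y⟩} : Set ℂ) := by
  rw [Pt_eq]
  exact collinear_mk_div_mk_div (by positivity) (mul_ne_zero (by positivity) h)
    (by unfold D₀; ring)

theorem collinear_Qt_Qpp (h : D₁ t y ≠ 0) : Collinear ℝ ({Qt t, Qpp t y, ⟨0, y⟩} : Set ℂ) :=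
  collinear_mk_div_mk_div (by positivity) (mul_ne_zero h (by positivity)) (by unfold D₁; ring)

theorem collinear_Rt_Rpp (h : D₂ t y ≠ 0) : Collinear ℝ ({Rt t, Rpp t y, ⟨0, y⟩} : Set ℂ) :=
  collinear_mk_div_mk_div (by positivity) (mul_ne_zero h (by positivity)) (by unfold D₂; ring)

end

/-- The points `P'', Q'', R''` lie on the conic `𝒦`, and `V = (0, y₀)` lies on each of the
lines `PP''`, `QQ''`, `RR''`. -/
theorem second_intersections_on_conic_and_lines (t y₀ : ℝ)
    (h₀ : D₀ t y₀ ≠ 0) (h₁ : D₁ t y₀ ≠ 0) (h₂ : D₂ t y₀ ≠ 0) :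
    OnK t (Ppp t y₀) ∧ OnK t (Qpp t y₀) ∧ OnK t (Rpp t y₀) ∧
    Collinear ℝ ({Pt t, Ppp t y₀, (⟨0, y₀⟩ : ℂ)} : Set ℂ) ∧
    Collinear ℝ ({Qt t, Qpp t y₀, (⟨0, y₀⟩ : ℂ)} : Set ℂ) ∧
    Collinear ℝ ({Rt t, Rpp t y₀, (⟨0, y₀⟩ : ℂ)} : Set ℂ) :=
  ⟨onK_Ppp h₀, onK_Qpp h₁, onK_Rpp h₂,
    collinear_Pt_Ppp h₀, collinear_Qt_Qpp h₁, collinear_Rt_Rpp h₂⟩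
end
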